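/- Hopf law for the complementary classical structures: δGᴴ * δR = (Real.sqrt 2)⁻¹ • (εGᴴ * εR) as 2×2 complex matrices; that is, red-copying followed by green-multiplication equals, up to the scalar 1/√2, red-deleting followed by the green unit. -/
import Mathlib


open Matrix

/-- The green (computational-basis) copying matrix. -/
def deltaG : Matrix (Fin 2 × Fin 2) (Fin 2) ℂ :=
  fun p k => if p.1 = k ∧ p.2 = k then 1 else 0

/-- The green (computational-basis) deleting matrix. -/
def epsG : Matrix (Fin 1) (Fin 2) ℂ := fun _ _ => 1

/-- The red (X-basis) copying matrix. -/
noncomputable def deltaR : Matrix (Fin 2 × Fin 2) (Fin 2) ℂ :=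
  fun p k => if k = p.1 + p.2 then (((Real.sqrt 2)⁻¹ : ℝ) : ℂ) else 0

/-- The red (X-basis) deleting matrix. -/
def epsR : Matrix (Fin 1) (Fin 2) ℂ := !![1, 0]

/-- Hopf law for the complementary classical structures: red-copying followed by
green-multiplication equals, up to `(√2)⁻¹`, red-deleting followed by the green unit. -/
theorem green_red_hopf :
    deltaGᴴ * deltaR = (Real.sqrt 2)⁻¹ • (epsGᴴ * epsR) := by
  ext i k
  simp only [Matrix.mul_apply, Matrix.conjTranspose_apply, Matrix.smul_apply,
    Fintype.sum_prod_type, Fin.sum_univ_two, deltaG, deltaR, epsG, epsR]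
  fin_cases i <;> fin_cases k <;>
    simp [Matrix.conjTranspose_apply, Fin.sum_univ_one] <;> norm_num
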